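/- Let f(x) = a_n x^n + a_{n-1} x^{n-1} + ... + a_2 x^2 + p^u be a polynomial with integer coefficients, where p is a prime number and u ≥ 1, and the coefficient of x^1 is zero. If p does not divide a_2, u is odd, and p^u > |a_n| + |a_{n-1}| + ... + |a_2|, then f(x) is irreducible over ℚ. -/

import Mathlib

open Polynomial Finset

lemma aux_prod_gt_one (s : Multiset ℝ) (hne : s ≠ 0) (h : ∀ x ∈ s, 1 < x) : 1 < s.prod := by
  have hle : ∀ (t : Multiset ℝ), (∀ x ∈ t, 1 ≤ x) → 1 ≤ t.prod := by
    intro t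
    refine Multiset.induction_on t (by simp) ?_
    intro b t ih hall
    rw [Multiset.prod_cons]
    have hb := hall b (Multiset.mem_cons_self b t)
    have ht := ih (fun x hx => hall x (Multiset.mem_cons_of_mem hx))
    nlinarith
  obtain ⟨a, ha⟩ := Multiset.exists_mem_of_ne_zero hne
  have hs : a ::ₘ s.erase a = s := Multiset.cons_erase ha
  have h1 : 1 ≤ (s.erase a).prod :=
    hle _ (fun x hx => le_of_lt (h x (Multiset.mem_of_mem_erase hx)))
  have ha1 : 1 < a := h a ha
  calc (1:ℝ) < a * (s.erase a).prod := by nlinarith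
    _ = s.prod := by rw [← Multiset.prod_cons, hs]

theorem stmt_6 (p n u : ℕ) (a : ℕ → ℤ) (hp : p.Prime) (hu : 1 ≤ u) (hn : 2 ≤ n)
    (hpa2 : ¬ (p : ℤ) ∣ a 2) (hodd : Odd u)
    (hsum : (p : ℤ) ^ u > ∑ i ∈ Finset.Icc 2 n, |a i|) :
    Irreducible ((∑ i ∈ Finset.Icc 2 n, C (a i) * X ^ i + C ((p : ℤ) ^ u)).map
      (Int.castRingHom ℚ)) := by
  set f : ℤ[X] := ∑ i ∈ Finset.Icc 2 n, C (a i) * X ^ i + C ((p : ℤ) ^ u) with hf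
  have hf0 : f.coeff 0 = (p:ℤ)^u := by
    rw [hf, coeff_add, coeff_C]
    simp [finset_sum_coeff, coeff_C_mul, coeff_X_pow, hn]
  have hf1 : f.coeff 1 = 0 := by
    rw [hf, coeff_add, coeff_C]
    simp [finset_sum_coeff, coeff_C_mul, coeff_X_pow, hn]
  have hf2 : f.coeff 2 = a 2 := by
    rw [hf, coeff_add, coeff_C]
    simp [finset_sum_coeff, coeff_C_mul, coeff_X_pow, hn]
  have ha2 : a 2 ≠ 0 := fun h => hpa2 (h ▸ dvd_zero _)
  have hppos : 0 < (p:ℤ)^u := pow_pos (by exact_mod_cast hp.pos) u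
  have hfne : f ≠ 0 := by
    intro h0
    have h1 : (0:ℤ) = (p:ℤ)^u := by rw [← hf0, h0, coeff_zero]
    linarith
  have hdeg2 : 2 ≤ f.natDegree := le_natDegree_of_ne_zero (hf2 ▸ ha2)
  have hprim : f.IsPrimitive := by
    intro r hr
    rw [C_dvd_iff_dvd_coeff] at hr
    have h0 : r ∣ (p:ℤ)^u := hf0 ▸ hr 0
    have h2 : r ∣ a 2 := hf2 ▸ hr 2
    have hna : r.natAbs ∣ p^u := by
      have := Int.natAbs_dvd_natAbs.mpr h0
      simpa [Int.natAbs_pow] using this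
    obtain ⟨k, hk, hrk⟩ := (Nat.dvd_prime_pow hp).1 hna
    rcases Nat.eq_zero_or_pos k with hk0 | hk1
    · rw [Int.isUnit_iff_natAbs_eq, hrk, hk0, pow_zero]
    · exfalso
      have hpr : (p:ℤ) ∣ r := by
        have : (p:ℤ) ∣ (r.natAbs : ℤ) := by
          exact_mod_cast (hrk ▸ dvd_pow_self p (Nat.pos_iff_ne_zero.mp hk1) : p ∣ r.natAbs)
        exact this.trans (Int.natAbs_dvd.mpr dvd_rfl)
      exact hpa2 (hpr.trans h2)
  rw [← Polynomial.IsPrimitive.Int.irreducible_iff_irreducible_map_cast hprim]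
  -- all complex roots have abs > 1
  have hroot : ∀ z : ℂ, (f.map (Int.castRingHom ℂ)).eval z = 0 → 1 < ‖z‖ := by
    intro z hz
    by_contra hle
    push_neg at hle
    have heval : (∑ i ∈ Finset.Icc 2 n, (a i : ℂ) * z ^ i) + (p:ℂ)^u = 0 := by
      rw [hf] at hz
      simpa [Polynomial.map_sum, eval_finset_sum] using hz
    have habs : ((p:ℝ))^u = ‖∑ i ∈ Finset.Icc 2 n, (a i : ℂ) * z ^ i‖ := by
      have : (p:ℂ)^u = -(∑ i ∈ Finset.Icc 2 n, (a i : ℂ) * z ^ i) := by linear_combination heval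
      rw [show ((p:ℝ))^u = ‖(p:ℂ)^u‖ by simp [map_pow], this, norm_neg]
    have hb : ‖∑ i ∈ Finset.Icc 2 n, (a i : ℂ) * z ^ i‖
        ≤ ∑ i ∈ Finset.Icc 2 n, ((|a i| : ℝ)) := by
      refine (norm_sum_le _ _).trans ?_
      apply Finset.sum_le_sum
      intro i hi
      rw [norm_mul, norm_pow]
      have h1 : ‖z‖ ^ i ≤ 1 := pow_le_one₀ (norm_nonneg z) hle
      have h2 : ‖(a i : ℂ)‖ = (|a i| : ℝ) := by
        simp [Complex.norm_intCast]
      calc ‖(a i : ℂ)‖ * ‖z‖ ^ i ≤ ‖(a i : ℂ)‖ * 1 :=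
            mul_le_mul_of_nonneg_left h1 (norm_nonneg _)
        _ = (|a i| : ℝ) := by rw [mul_one, h2]
    have hlt : (∑ i ∈ Finset.Icc 2 n, ((|a i| : ℝ))) < (p:ℝ)^u := by
      exact_mod_cast hsum
    rw [habs] at hlt
    exact absurd (hb.trans_lt hlt) (lt_irrefl _)
  -- constant coefficient of nontrivial factors
  have keyq : ∀ q : ℤ[X], q ∣ f → 1 ≤ q.natDegree → 1 < (q.coeff 0).natAbs := by
    intro q hq hdq
    have hqne : q ≠ 0 := fun h => hfne (by simpa [h] using hq)
    set Q : ℂ[X] := q.map (Int.castRingHom ℂ) with hQ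
    have hQne : Q ≠ 0 := by
      rw [hQ, Ne, Polynomial.map_eq_zero_iff (f := Int.castRingHom ℂ) (RingHom.injective_int _)]
      exact hqne
    have hQdeg : Q.natDegree = q.natDegree :=
      natDegree_map_eq_of_injective (RingHom.injective_int _) q
    have hsplit : Splits Q := IsAlgClosed.splits Q
    have hcard : Multiset.card Q.roots = q.natDegree := by
      rw [← hQdeg]; exact (splits_iff_card_roots).1 hsplit
    have heq := hsplit.eq_prod_roots
    have heval : Q.eval 0 = Q.leadingCoeff * (Q.roots.map (fun a => -a)).prod := by
      conv_lhs => rw [heq]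
      simp [eval_multiset_prod, Multiset.map_map, Function.comp]
    have habs : ‖Q.eval 0‖
        = ‖Q.leadingCoeff‖ * ((Q.roots.map (fun a => ‖a‖)).prod) := by
      have hm : ‖(Q.roots.map (fun a => -a)).prod‖
          = ((Q.roots.map (fun a => -a)).map (fun x => ‖x‖)).prod :=
        map_multiset_prod (normHom (α := ℂ)) _
      rw [heval, norm_mul, hm, Multiset.map_map]
      congr 1
      exact congrArg Multiset.prod (Multiset.map_congr rfl (fun x _ => norm_neg x))
    have hlead : 1 ≤ ‖Q.leadingCoeff‖ := by
      have : Q.leadingCoeff = (q.leadingCoeff : ℂ) := by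
        rw [hQ, leadingCoeff_map_of_injective (RingHom.injective_int _)]
        rfl
      rw [this, Complex.norm_intCast]
      have : q.leadingCoeff ≠ 0 := leadingCoeff_ne_zero.mpr hqne
      have h1 : (1:ℤ) ≤ |q.leadingCoeff| := Int.one_le_abs (by omega)
      calc (1:ℝ) = ((1:ℤ):ℝ) := by norm_num
        _ ≤ (|q.leadingCoeff| : ℝ) := by exact_mod_cast h1
        _ = |(q.leadingCoeff : ℝ)| := by push_cast; ring
    have hprodgt : 1 < (Q.roots.map (fun a => ‖a‖)).prod := by
      apply aux_prod_gt_one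
      · intro h
        have : Multiset.card (Q.roots.map (fun a => ‖a‖)) = 0 := by rw [h]; rfl
        rw [Multiset.card_map, hcard] at this
        omega
      · intro x hx
        obtain ⟨z, hz, rfl⟩ := Multiset.mem_map.1 hx
        apply hroot
        have hzQ : Q.eval z = 0 := (mem_roots hQne).1 hz
        obtain ⟨r, hr⟩ := hq
        rw [hr, Polynomial.map_mul, eval_mul, ← hQ, hzQ, zero_mul]
    have : 1 < ‖Q.eval 0‖ := by
      rw [habs]
      calc (1:ℝ) = 1 * 1 := by ring
        _ < ‖Q.leadingCoeff‖ * (Q.roots.map (fun a => ‖a‖)).prod := by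
            apply mul_lt_mul' hlead hprodgt (by norm_num)
            linarith
    have hq0 : Q.eval 0 = ((q.coeff 0 : ℤ) : ℂ) := by
      rw [hQ]; simp [eval_map, eval₂_at_zero]
    rw [hq0, Complex.norm_intCast] at this
    have : (1:ℝ) < ((q.coeff 0).natAbs : ℝ) := by
      rwa [show |((q.coeff 0 : ℤ):ℝ)| = (((q.coeff 0).natAbs : ℕ) : ℝ) by
        rw [← Int.cast_abs, Int.abs_eq_natAbs, Int.cast_natCast]] at this
    exact_mod_cast this
  constructor
  · intro hunit
    have := natDegree_eq_zero_of_isUnit hunit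
    omega
  · rintro g h hgh
    by_contra hc
    push_neg at hc
    obtain ⟨hgu, hhu⟩ := hc
    have hdg : 1 ≤ g.natDegree := by
      by_contra hdg
      push_neg at hdg
      have hg0' : g.natDegree = 0 := by omega
      obtain ⟨c, rfl⟩ := natDegree_eq_zero.1 hg0'
      exact hgu (isUnit_C.mpr (hprim c ⟨h, hgh⟩))
    have hdh : 1 ≤ h.natDegree := by
      by_contra hdh
      push_neg at hdh
      have hh0' : h.natDegree = 0 := by omega
      obtain ⟨c, rfl⟩ := natDegree_eq_zero.1 hh0'
      exact hhu (isUnit_C.mpr (hprim c ⟨g, by rw [hgh]; ring⟩))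
    have hgdvd : g ∣ f := ⟨h, hgh⟩
    have hhdvd : h ∣ f := ⟨g, by rw [hgh]; ring⟩
    have keyg := keyq g hgdvd hdg
    have keyh := keyq h hhdvd hdh
    have hgh0 : g.coeff 0 * h.coeff 0 = (p:ℤ)^u := by
      rw [← mul_coeff_zero, ← hgh, hf0]
    -- natAbs are powers of p
    have hgna : (g.coeff 0).natAbs ∣ p ^ u := by
      have : g.coeff 0 ∣ (p:ℤ)^u := ⟨h.coeff 0, hgh0.symm⟩
      have := Int.natAbs_dvd_natAbs.mpr this
      simpa [Int.natAbs_pow] using this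
    have hhna : (h.coeff 0).natAbs ∣ p ^ u := by
      have : h.coeff 0 ∣ (p:ℤ)^u := ⟨g.coeff 0, by rw [← hgh0]; ring⟩
      have := Int.natAbs_dvd_natAbs.mpr this
      simpa [Int.natAbs_pow] using this
    obtain ⟨s, hsu, hgs⟩ := (Nat.dvd_prime_pow hp).1 hgna
    obtain ⟨t, htu, hht⟩ := (Nat.dvd_prime_pow hp).1 hhna
    have hs1 : 1 ≤ s := by
      by_contra hs0
      push_neg at hs0
      interval_cases s
      rw [pow_zero] at hgs
      omega
    have ht1 : 1 ≤ t := by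
      by_contra ht0
      push_neg at ht0
      interval_cases t
      rw [pow_zero] at hht
      omega
    have hstu : s + t = u := by
      have : (g.coeff 0).natAbs * (h.coeff 0).natAbs = p ^ u := by
        rw [← Int.natAbs_mul, hgh0]
        simp [Int.natAbs_pow]
      rw [hgs, hht, ← pow_add] at this
      exact Nat.pow_right_injective hp.two_le this
    -- coefficient 1 and 2 relations
    have hc1 : g.coeff 0 * h.coeff 1 + g.coeff 1 * h.coeff 0 = 0 := by
      have : f.coeff 1 = g.coeff 0 * h.coeff 1 + g.coeff 1 * h.coeff 0 := by
        rw [hgh, coeff_mul]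
        rw [Finset.Nat.sum_antidiagonal_eq_sum_range_succ_mk]
        simp [Finset.sum_range_succ]
      rw [← this]; exact hf1
    have hc2 : g.coeff 0 * h.coeff 2 + g.coeff 1 * h.coeff 1 + g.coeff 2 * h.coeff 0 = a 2 := by
      have : f.coeff 2 = g.coeff 0 * h.coeff 2 + g.coeff 1 * h.coeff 1 + g.coeff 2 * h.coeff 0 := by
        rw [hgh, coeff_mul]
        rw [Finset.Nat.sum_antidiagonal_eq_sum_range_succ_mk]
        simp [Finset.sum_range_succ]
      rw [← this]; exact hf2
    have hpg0 : (p:ℤ) ∣ g.coeff 0 := by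
      have h1 : (p:ℤ) ∣ ((g.coeff 0).natAbs : ℤ) := by
        exact_mod_cast (hgs ▸ dvd_pow_self p (by omega) : p ∣ (g.coeff 0).natAbs)
      exact h1.trans (Int.natAbs_dvd.mpr dvd_rfl)
    have hph0 : (p:ℤ) ∣ h.coeff 0 := by
      have h1 : (p:ℤ) ∣ ((h.coeff 0).natAbs : ℤ) := by
        exact_mod_cast (hht ▸ dvd_pow_self p (by omega) : p ∣ (h.coeff 0).natAbs)
      exact h1.trans (Int.natAbs_dvd.mpr dvd_rfl)
    have hpg1h1 : ¬ (p:ℤ) ∣ g.coeff 1 * h.coeff 1 := by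
      intro hd
      apply hpa2
      have : a 2 = g.coeff 0 * h.coeff 2 + g.coeff 1 * h.coeff 1 + g.coeff 2 * h.coeff 0 := hc2.symm
      rw [this]
      exact dvd_add (dvd_add (hpg0.mul_right _) hd) ((hph0.mul_left _))
    have hpg1 : ¬ (p:ℕ) ∣ (g.coeff 1).natAbs := by
      intro hd
      apply hpg1h1
      have : (p:ℤ) ∣ g.coeff 1 := by
        have h1 : (p:ℤ) ∣ ((g.coeff 1).natAbs : ℤ) := by exact_mod_cast hd
        exact h1.trans (Int.natAbs_dvd.mpr dvd_rfl)
      exact this.mul_right _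
    have hph1 : ¬ (p:ℕ) ∣ (h.coeff 1).natAbs := by
      intro hd
      apply hpg1h1
      have : (p:ℤ) ∣ h.coeff 1 := by
        have h1 : (p:ℤ) ∣ ((h.coeff 1).natAbs : ℤ) := by exact_mod_cast hd
        exact h1.trans (Int.natAbs_dvd.mpr dvd_rfl)
      exact this.mul_left _
    -- main equation
    have hkey : p ^ s * (h.coeff 1).natAbs = (g.coeff 1).natAbs * p ^ t := by
      have : g.coeff 0 * h.coeff 1 = -(g.coeff 1 * h.coeff 0) := by linarith [hc1]
      have hna := congrArg Int.natAbs this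
      rw [Int.natAbs_mul, Int.natAbs_neg, Int.natAbs_mul, hgs, hht] at hna
      exact hna
    have hst : s = t := by
      by_contra hne
      rcases Nat.lt_or_ge s t with hlt | hge
      · apply hph1
        have hpt : p ^ t = p ^ s * p ^ (t - s) := by rw [← pow_add]; congr 1; omega
        have h2 : p ^ s * (h.coeff 1).natAbs = p ^ s * ((g.coeff 1).natAbs * p ^ (t - s)) := by
          rw [hkey, hpt]; ring
        have heq2 := Nat.eq_of_mul_eq_mul_left (pow_pos hp.pos s) h2
        rw [heq2]
        exact Dvd.dvd.mul_left (dvd_pow_self p (by omega)) _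
      · have hlt : t < s := by omega
        apply hpg1
        have hps : p ^ s = p ^ t * p ^ (s - t) := by rw [← pow_add]; congr 1; omega
        have h2 : (g.coeff 1).natAbs * p ^ t = ((h.coeff 1).natAbs * p ^ (s - t)) * p ^ t := by
          rw [← hkey, hps]; ring
        have heq2 := Nat.eq_of_mul_eq_mul_right (pow_pos hp.pos t) h2
        rw [heq2]
        exact Dvd.dvd.mul_left (dvd_pow_self p (by omega)) _
    obtain ⟨m, hm⟩ := hodd
    omega
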